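/- arXiv:1907.13462 — 2 statements merged into one kernel-verified Lean document; each statement's English description precedes it below -/
import Mathlib

section
/- In the Hoffman bound setting, if equality α(X) = v(−τ)/(k−τ) holds, then every vertex not in a maximum coclique C of size α(X) has exactly −τ neighbors in C. -/
/-!
Since `τ` is the least eigenvalue of `A`, the matrix `A - τ` is positive semidefinite. For a
coclique `C` put `z = n • 1_C - |C| • 1`, which is orthogonal to the all-ones eigenvector of `A`.
Counting edges gives `zᵀ (A - τ) z = n |C| (-τ n - (k - τ) |C|)`: this is the Hoffman bound, and
under equality `z` is a null vector of the form, hence lies in the kernel of `A - τ`. Reading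
`A z = τ z` off at a vertex `x ∉ C` gives `n · #(N(x) ∩ C) - k |C| = -τ |C|`, i.e.
`#(N(x) ∩ C) = -τ`.
-/

open Matrix Finset
open scoped MatrixOrder ComplexOrder

theorem Matrix.IsHermitian.posSemidef_sub_algebraMap {𝕜 n : Type*} [RCLike 𝕜] [Fintype n]
    [DecidableEq n] {A : Matrix n n 𝕜} (hA : A.IsHermitian) {τ : ℝ}
    (hτ : ∀ x ∈ spectrum ℝ A, τ ≤ x) : (A - algebraMap ℝ (Matrix n n 𝕜) τ).PosSemidef :=
  (algebraMap_le_iff_le_spectrum hA.isSelfAdjoint).2 hτ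

theorem Matrix.algebraMap_mulVec {n R : Type*} [Fintype n] [DecidableEq n] [CommSemiring R]
    (r : R) (v : n → R) : algebraMap R (Matrix n n R) r *ᵥ v = r • v := by
  rw [Algebra.algebraMap_eq_smul_one, smul_mulVec, one_mulVec]

namespace Finset

variable {V R : Type*} [Fintype V]

variable (R) in
noncomputable def centeredIndicator [Ring R] (C : Finset V) : V → R :=
  (Fintype.card V : R) • (C : Set V).indicator 1 - (#C : R) • 1

theorem centeredIndicator_apply_of_notMem [Ring R] {C : Finset V} {x : V} (hx : x ∉ C) :
    centeredIndicator R C x = -#C := by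
  simp [centeredIndicator, hx]

theorem indicator_dotProduct_one [NonAssocSemiring R] (C : Finset V) :
    (C : Set V).indicator 1 ⬝ᵥ (1 : V → R) = #C := by
  classical
  rw [dotProduct_one, sum_indicator_eq_sum_filter]
  simp

theorem centeredIndicator_dotProduct_self [CommRing R] (C : Finset V) :
    centeredIndicator R C ⬝ᵥ centeredIndicator R C
      = Fintype.card V * #C * (Fintype.card V - #C) := by
  have hχχ : (C : Set V).indicator 1 ⬝ᵥ (C : Set V).indicator (1 : V → R) = #C := by
    rw [← indicator_dotProduct_one C]
    refine sum_congr rfl fun u _ => ?_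
    by_cases hu : u ∈ C <;> simp [hu]
  simp only [centeredIndicator, dotProduct_sub, sub_dotProduct, dotProduct_smul, smul_dotProduct,
    hχχ, indicator_dotProduct_one, dotProduct_comm 1, one_dotProduct_one, smul_eq_mul]
  ring

end Finset

namespace SimpleGraph

variable {V R : Type*} [Fintype V] {G : SimpleGraph V} [DecidableRel G.Adj]

theorem adjMatrix_mulVec_indicator_apply [NonAssocSemiring R] (C : Finset V) (u : V) :
    (G.adjMatrix R *ᵥ (C : Set V).indicator 1) u = #{y ∈ C | G.Adj u y} := by
  classical
  rw [adjMatrix_mulVec_apply, sum_indicator_eq_sum_filter]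
  simp only [Pi.one_apply, sum_const, nsmul_one]
  congr 2
  ext w
  simp [and_comm]

theorem IsIndepSet.indicator_dotProduct_adjMatrix_mulVec_indicator [NonAssocSemiring R]
    {C : Finset V} (hC : G.IsIndepSet C) :
    (C : Set V).indicator 1 ⬝ᵥ G.adjMatrix R *ᵥ (C : Set V).indicator (1 : V → R) = 0 := by
  rw [dotProduct_mulVec_adjMatrix]
  refine sum_eq_zero fun u _ => sum_eq_zero fun w _ => ?_
  split_ifs with h
  · by_cases hu : u ∈ C
    · have hw : w ∉ C := fun hw => hC hu hw (G.ne_of_adj h) h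
      simp [hw]
    · simp [hu]
  · rfl

namespace IsRegularOfDegree

variable {k : ℕ}

theorem adjMatrix_mulVec_one [NonAssocSemiring R] (h : G.IsRegularOfDegree k) :
    G.adjMatrix R *ᵥ 1 = (k : R) • 1 := by
  ext u
  simp [adjMatrix_mulVec_apply, h u]

theorem adjMatrix_mulVec_centeredIndicator_apply [CommRing R] (h : G.IsRegularOfDegree k)
    (C : Finset V) (u : V) :
    (G.adjMatrix R *ᵥ centeredIndicator R C) u
      = Fintype.card V * #{y ∈ C | G.Adj u y} - k * #C := by
  simp only [centeredIndicator, mulVec_sub, mulVec_smul, h.adjMatrix_mulVec_one, Pi.sub_apply,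
    Pi.smul_apply, adjMatrix_mulVec_indicator_apply, Pi.one_apply, smul_eq_mul, mul_one]
  ring

theorem centeredIndicator_dotProduct_adjMatrix_mulVec [CommRing R] (h : G.IsRegularOfDegree k)
    {C : Finset V} (hC : G.IsIndepSet C) :
    centeredIndicator R C ⬝ᵥ G.adjMatrix R *ᵥ centeredIndicator R C
      = -(Fintype.card V * k * #C ^ 2) := by
  have hsymm : (1 : V → R) ⬝ᵥ G.adjMatrix R *ᵥ (C : Set V).indicator 1 = k * #C := by
    rw [dotProduct_mulVec, ← mulVec_transpose, transpose_adjMatrix, h.adjMatrix_mulVec_one,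
      smul_dotProduct, dotProduct_comm, indicator_dotProduct_one, smul_eq_mul]
  simp only [centeredIndicator, mulVec_sub, mulVec_smul, dotProduct_sub, sub_dotProduct,
    dotProduct_smul, smul_dotProduct, hC.indicator_dotProduct_adjMatrix_mulVec_indicator, hsymm,
    h.adjMatrix_mulVec_one, indicator_dotProduct_one, one_dotProduct_one, smul_eq_mul]
  ring

end IsRegularOfDegree

end SimpleGraph

theorem hoffman_bound_equality_general {V : Type*} [Fintype V] [DecidableEq V]
    (G : SimpleGraph V) [DecidableRel G.Adj]
    (k : ℕ) (hreg : G.IsRegularOfDegree k)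
    (τ : ℝ)
    (hτmin : ∀ x ∈ spectrum ℝ (G.adjMatrix ℝ), τ ≤ x) (hτneg : τ < 0)
    (C : Finset V) (hC : ∀ x ∈ C, ∀ y ∈ C, x ≠ y → ¬ G.Adj x y)
    (heq : (C.card : ℝ) = (Fintype.card V : ℝ) * (-τ) / ((k : ℝ) - τ)) :
    ∀ x ∉ C, ((C.filter (fun y => G.Adj x y)).card : ℝ) = -τ := by
  intro x hx
  have hindep : G.IsIndepSet C := fun u hu w hw => hC u hu w hw
  have hV : (0 : ℝ) < Fintype.card V := by exact_mod_cast Fintype.card_pos_iff.2 ⟨x⟩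
  have hbound : (#C : ℝ) * (k - τ) = Fintype.card V * -τ := by
    rw [heq, div_mul_cancel₀]
    linarith [k.cast_nonneg (α := ℝ)]
  have hpsd := (G.isHermitian_adjMatrix ℝ).posSemidef_sub_algebraMap hτmin
  have hnull : centeredIndicator ℝ C ⬝ᵥ
      (G.adjMatrix ℝ - algebraMap ℝ _ τ) *ᵥ centeredIndicator ℝ C = 0 := by
    rw [sub_mulVec, algebraMap_mulVec, dotProduct_sub, dotProduct_smul,
      hreg.centeredIndicator_dotProduct_adjMatrix_mulVec hindep, centeredIndicator_dotProduct_self,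
      smul_eq_mul]
    linear_combination (-(Fintype.card V : ℝ) * #C) * hbound
  have hker := congrFun ((hpsd.dotProduct_mulVec_zero_iff _).1 (by simpa using hnull)) x
  rw [sub_mulVec, algebraMap_mulVec, Pi.sub_apply, Pi.smul_apply,
    hreg.adjMatrix_mulVec_centeredIndicator_apply, centeredIndicator_apply_of_notMem hx,
    smul_eq_mul, Pi.zero_apply] at hker
  refine mul_left_cancel₀ hV.ne' ?_
  linear_combination hker + hbound

/-- Equality case of the Hoffman bound: if a maximum coclique `C` attains the bound
`|C| = v·(−τ)/(k−τ)`, then every vertex not in `C` has exactly `−τ` neighbours in `C`. -/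
theorem hoffman_bound_equality {V : Type*} [Fintype V] [DecidableEq V]
    (G : SimpleGraph V) [DecidableRel G.Adj]
    (k : ℕ) (hk : 0 < k) (hreg : G.IsRegularOfDegree k)
    (τ : ℝ) (hτmem : τ ∈ spectrum ℝ (G.adjMatrix ℝ))
    (hτmin : ∀ x ∈ spectrum ℝ (G.adjMatrix ℝ), τ ≤ x) (hτneg : τ < 0)
    (C : Finset V) (hC : ∀ x ∈ C, ∀ y ∈ C, x ≠ y → ¬ G.Adj x y)
    (hCmax : ∀ S : Finset V, (∀ x ∈ S, ∀ y ∈ S, x ≠ y → ¬ G.Adj x y) → S.card ≤ C.card)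
    (heq : (C.card : ℝ) = (Fintype.card V : ℝ) * (-τ) / ((k : ℝ) - τ)) :
    ∀ x ∉ C, ((C.filter (fun y => G.Adj x y)).card : ℝ) = -τ :=
  hoffman_bound_equality_general G k hreg τ hτmin hτneg C hC heq
end

section
/- With Γ, ∞, and d_i as in the previous setting, Σ_{i=1}^{k} d_i² = 2sn(s²n² − 6sn − 6s² + 10s + 8) + 9s³ + 3s² − 24s − 4, and consequently Σ_{i=1}^{k} (d_i − (sn−2))² = (s−1)s²(n−3)². -/
/-!
Let `A` be the adjacency matrix, with simple eigenvalue `k` and remaining eigenvalues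
`r₁, r₂, r₃`, and put `q = (X - r₁)(X - r₂)(X - r₃)`, `M = q(A)`. By the spectral theorem
`A M = k M`, hence `M² = q(k) M`, `M` has row sums `q(k)` and trace `q(k)`; Cauchy–Schwarz on the
rows then forces every diagonal entry of `M` to equal `q(k) / N`. Reading off the diagonal
entries of `M` and `A M` through closed walks, `(A³)ᵥᵥ = Σ dᵢ` and
`(A⁴)ᵥᵥ = k² + Σ dᵢ² + (N - k - 1) μ²` by co-edge-regularity, gives two linear equations for
`Σ dᵢ` and `Σ dᵢ²`; for the spectrum of the clique extension of `T(n)` they evaluate to the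
stated sums.
-/

open Matrix Polynomial Finset

theorem Polynomial.aeval_cubic {R A : Type*} [CommRing R] [Ring A] [Algebra R A] (x : A)
    (a b c : R) :
    aeval x ((X - C a) * (X - C b) * (X - C c)) =
      x ^ 3 - (a + b + c) • x ^ 2 + (a * b + a * c + b * c) • x - (a * b * c) • 1 := by
  simp only [map_mul, map_sub, aeval_X, aeval_C, Algebra.algebraMap_eq_smul_one]
  simp only [sub_mul, mul_sub, smul_mul_assoc, mul_smul_comm, one_mul, mul_one, pow_succ,
    pow_zero, mul_assoc]
  module

theorem Polynomial.isRoot_cubic_of_isRoot_pow_mul_pow_mul_pow {R : Type*} [CommRing R]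
    [IsDomain R] {r₁ r₂ r₃ x : R} {a b e : ℕ}
    (h : ((X - C r₁) ^ a * (X - C r₂) ^ b * (X - C r₃) ^ e).IsRoot x) :
    ((X - C r₁) * (X - C r₂) * (X - C r₃)).IsRoot x := by
  simp only [IsRoot, eval_mul, eval_pow, eval_sub, eval_X, eval_C, mul_eq_zero,
    pow_eq_zero_iff'] at h ⊢
  tauto

theorem Matrix.card_eq_of_charpoly_eq {R m : Type*} [CommRing R] [IsDomain R] [Fintype m]
    [DecidableEq m] {A : Matrix m m R} {k r₁ r₂ r₃ : R} {a b e : ℕ}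
    (h : A.charpoly = (X - C k) * (X - C r₁) ^ a * (X - C r₂) ^ b * (X - C r₃) ^ e) :
    Fintype.card m = 1 + a + b + e := by
  rw [← A.charpoly_natDegree_eq_dim, h, natDegree_mul, natDegree_mul, natDegree_mul] <;>
    simp only [natDegree_pow, natDegree_X_sub_C, mul_one, ne_eq, mul_eq_zero, pow_eq_zero_iff',
      X_sub_C_ne_zero, false_and, or_self, not_false_eq_true]

theorem Matrix.aeval_mul_of_mul_eq_smul {R m o : Type*} [CommRing R] [Fintype m] [DecidableEq m]
    {A : Matrix m m R} {B : Matrix m o R} {μ : R} (h : A * B = μ • B) (p : R[X]) :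
    aeval A p * B = p.eval μ • B := by
  have hpow : ∀ k : ℕ, A ^ k * B = μ ^ k • B := by
    intro k
    induction k with
    | zero => simp
    | succ k ih =>
      rw [pow_succ, Matrix.mul_assoc, h, Matrix.mul_smul, ih, smul_smul, pow_succ, mul_comm]
  induction p using Polynomial.induction_on' with
  | add p q hp hq => rw [map_add, Matrix.add_mul, hp, hq, eval_add, add_smul]
  | monomial k a =>
    rw [aeval_monomial, eval_monomial, Algebra.algebraMap_eq_smul_one, smul_mul_assoc, one_mul,
      Matrix.smul_mul, hpow, smul_smul]

namespace Matrix.IsHermitian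

variable {n : Type*} [Fintype n] [DecidableEq n] {A : Matrix n n ℝ}

theorem apply_self_eq_div_card {m : Type*} [Fintype m]
    {M : Matrix m m ℝ} {c : ℝ} (hM : M.IsHermitian) (hc : 0 < c) (hsq : M * M = c • M)
    (hrow : ∀ x, ∑ y, M x y = c) (htr : M.trace = c) (x : m) :
    M x x = c / Fintype.card m := by
  have hN : (0 : ℝ) < Fintype.card m := Nat.cast_pos.mpr (Fintype.card_pos_iff.mpr ⟨x⟩)
  have hsum_sq : ∀ x, ∑ y, M x y ^ 2 = c * M x x := fun x => by
    have hxx := congrFun (congrFun hsq x) x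
    simp only [mul_apply, smul_apply, smul_eq_mul] at hxx
    rw [← hxx]
    refine sum_congr rfl fun y _ => ?_
    rw [sq, ← hM.apply y x, star_trivial]
  have hge : ∀ x, c / Fintype.card m ≤ M x x := fun x => by
    have hcs := sq_sum_le_card_mul_sum_sq (s := univ) (f := fun y => M x y)
    rw [hrow x, hsum_sq x, card_univ] at hcs
    rw [div_le_iff₀ hN]
    nlinarith
  have hsum : ∑ x, M x x = ∑ _x : m, c / Fintype.card m := by
    rw [sum_const, card_univ, nsmul_eq_mul, mul_div_cancel₀ _ hN.ne']
    exact htr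
  exact ((sum_eq_sum_iff_of_le fun x _ => hge x).mp hsum.symm x (mem_univ x)).symm

theorem aeval_eq_zero_of_forall_eval_eigenvalues (hA : A.IsHermitian) {p : ℝ[X]}
    (hp : ∀ i, p.eval (hA.eigenvalues i) = 0) : aeval A p = 0 := by
  rw [← cfc_polynomial p A hA.isSelfAdjoint, ← cfc_zero ℝ A]
  refine cfc_congr ?_
  rw [hA.spectrum_real_eq_range_eigenvalues]
  rintro _ ⟨i, rfl⟩
  exact hp i

theorem trace_aeval (hA : A.IsHermitian) (p : ℝ[X]) :
    trace (aeval A p) = ∑ i, p.eval (hA.eigenvalues i) := by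
  rw [← cfc_polynomial p A hA.isSelfAdjoint, hA.cfc_eq, IsHermitian.cfc,
    Unitary.conjStarAlgAut_apply, trace_mul_cycle, Unitary.coe_star_mul_self, one_mul,
    trace_diagonal]
  simp

theorem card_eigenvalues_eq_rootMultiplicity (hA : A.IsHermitian) (μ : ℝ) :
    #{i | hA.eigenvalues i = μ} = A.charpoly.rootMultiplicity μ := by
  rw [← count_roots, hA.roots_charpoly_eq_eigenvalues, Multiset.count_map, Finset.card_def,
    Finset.filter_val]
  simp [eq_comm]

theorem isRoot_charpoly_eigenvalues (hA : A.IsHermitian) (i : n) :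
    A.charpoly.IsRoot (hA.eigenvalues i) := by
  have hmem : hA.eigenvalues i ∈ A.charpoly.roots := by
    rw [hA.roots_charpoly_eq_eigenvalues]
    exact Multiset.mem_map_of_mem _ (mem_univ i)
  exact isRoot_of_mem_roots hmem

theorem card_eigenvalues_eq_one_of_charpoly_eq (hA : A.IsHermitian) {μ : ℝ} {P : ℝ[X]}
    (h : A.charpoly = (X - C μ) * P) (hP : ¬ P.IsRoot μ) : #{i | hA.eigenvalues i = μ} = 1 := by
  rw [hA.card_eigenvalues_eq_rootMultiplicity, h,
    rootMultiplicity_mul (h ▸ A.charpoly_monic.ne_zero), rootMultiplicity_X_sub_C_self,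
    rootMultiplicity_eq_zero hP]

theorem eigenvalues_eq_or_isRoot_of_charpoly_eq (hA : A.IsHermitian) {μ : ℝ} {P : ℝ[X]}
    (h : A.charpoly = (X - C μ) * P) (i : n) :
    hA.eigenvalues i = μ ∨ P.IsRoot (hA.eigenvalues i) := by
  have hi := hA.isRoot_charpoly_eigenvalues i
  rwa [h, IsRoot, eval_mul, mul_eq_zero, eval_sub, eval_X, eval_C, sub_eq_zero] at hi

theorem mul_aeval_eq_smul (hA : A.IsHermitian) {μ : ℝ} {q : ℝ[X]}
    (hq : ∀ i, hA.eigenvalues i = μ ∨ q.eval (hA.eigenvalues i) = 0) :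
    A * aeval A q = μ • aeval A q := by
  have h := hA.aeval_eq_zero_of_forall_eval_eigenvalues (p := (X - C μ) * q) fun i => by
    rcases hq i with h | h <;> simp [h]
  rwa [map_mul, map_sub, aeval_X, aeval_C, Algebra.algebraMap_eq_smul_one, sub_mul,
    smul_mul_assoc, one_mul, sub_eq_zero] at h

theorem aeval_apply_self_eq_div_card (hA : A.IsHermitian) {μ : ℝ} {q : ℝ[X]}
    (hq : ∀ i, hA.eigenvalues i = μ ∨ q.eval (hA.eigenvalues i) = 0)
    (hsimple : #{i | hA.eigenvalues i = μ} = 1)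
    (hrow : A * of (fun _ _ => 1) = μ • of (fun _ _ => (1 : ℝ))) (hpos : 0 < q.eval μ) (x : n) :
    aeval A q x x = q.eval μ / Fintype.card n := by
  have hM : (aeval A q).IsHermitian := by
    rw [← cfc_polynomial q A hA.isSelfAdjoint]
    exact cfc_predicate _ A
  refine hM.apply_self_eq_div_card hpos
    (aeval_mul_of_mul_eq_smul (hA.mul_aeval_eq_smul hq) q) (fun x => ?_) ?_ x
  · simpa [mul_apply] using congrFun (congrFun (aeval_mul_of_mul_eq_smul hrow q) x) x
  · rw [hA.trace_aeval, ← sum_filter_add_sum_filter_not univ fun i => hA.eigenvalues i = μ,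
      sum_congr rfl fun i hi => by rw [(mem_filter.mp hi).2], sum_const, hsimple, one_smul,
      sum_eq_zero fun i hi => ((hq i).resolve_left (mem_filter.mp hi).2), add_zero]

end Matrix.IsHermitian

namespace SimpleGraph

variable {V : Type*} [Fintype V] [DecidableEq V] (G : SimpleGraph V) [DecidableRel G.Adj]

theorem adjMatrix_mul_self_apply {R : Type*} [NonAssocSemiring R] (x y : V) :
    (G.adjMatrix R * G.adjMatrix R) x y = #(G.neighborFinset x ∩ G.neighborFinset y) := by
  simp only [adjMatrix_mul_apply, adjMatrix_apply, sum_boole]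
  congr 2
  ext u
  simp [adj_comm]

theorem adjMatrix_pow_three_apply_self {R : Type*} [Semiring R] (v : V) :
    (G.adjMatrix R ^ 3) v v =
      ∑ y ∈ G.neighborFinset v, (#(G.neighborFinset v ∩ G.neighborFinset y) : R) := by
  rw [pow_succ, pow_two, mul_adjMatrix_apply]
  simp only [adjMatrix_mul_self_apply]

theorem adjMatrix_pow_four_apply_self {R : Type*} [Semiring R] (v : V) :
    (G.adjMatrix R ^ 4) v v = ∑ y, (#(G.neighborFinset v ∩ G.neighborFinset y) : R) ^ 2 := by
  rw [show 4 = 2 + 2 from rfl, pow_add, mul_apply]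
  refine sum_congr rfl fun y _ => ?_
  rw [pow_two, adjMatrix_mul_self_apply, adjMatrix_mul_self_apply, inter_comm, sq]

theorem sum_sq_card_common_neighbors {μ : ℕ} (v : V)
    (hμ : ∀ y, v ≠ y → ¬ G.Adj v y → #(G.neighborFinset v ∩ G.neighborFinset y) = μ) :
    ∑ y, #(G.neighborFinset v ∩ G.neighborFinset y) ^ 2 =
      G.degree v ^ 2 + ∑ y ∈ G.neighborFinset v, #(G.neighborFinset v ∩ G.neighborFinset y) ^ 2
        + (Fintype.card V - (G.degree v + 1)) * μ ^ 2 := by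
  have hv : v ∉ G.neighborFinset v := G.notMem_neighborFinset_self v
  have hfar : ∀ y ∈ univ \ insert v (G.neighborFinset v),
      #(G.neighborFinset v ∩ G.neighborFinset y) ^ 2 = μ ^ 2 := fun y hy => by
    simp only [mem_sdiff, mem_univ, mem_insert, mem_neighborFinset, true_and, not_or] at hy
    rw [hμ y (Ne.symm hy.1) hy.2]
  rw [← sum_sdiff (subset_univ (insert v (G.neighborFinset v))), sum_insert hv, inter_self,
    card_neighborFinset_eq_degree, sum_congr rfl hfar, sum_const, smul_eq_mul,
    card_sdiff_of_subset (subset_univ _), card_insert_of_notMem hv,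
    card_neighborFinset_eq_degree, card_univ]
  ring

theorem adjMatrix_mul_aeval_of_charpoly_eq {k : ℝ} {P q : ℝ[X]}
    (hchar : (G.adjMatrix ℝ).charpoly = (X - C k) * P) (hPq : ∀ x, P.IsRoot x → q.IsRoot x) :
    G.adjMatrix ℝ * aeval (G.adjMatrix ℝ) q = k • aeval (G.adjMatrix ℝ) q :=
  (G.isHermitian_adjMatrix ℝ).mul_aeval_eq_smul fun i =>
    ((G.isHermitian_adjMatrix ℝ).eigenvalues_eq_or_isRoot_of_charpoly_eq hchar i).imp_right
      (hPq _)

theorem aeval_adjMatrix_apply_self_of_charpoly_eq {k : ℕ} {P q : ℝ[X]}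
    (hreg : G.IsRegularOfDegree k) (hchar : (G.adjMatrix ℝ).charpoly = (X - C (k : ℝ)) * P)
    (hPq : ∀ x, P.IsRoot x → q.IsRoot x) (hpos : 0 < q.eval (k : ℝ)) (v : V) :
    aeval (G.adjMatrix ℝ) q v v = q.eval (k : ℝ) / Fintype.card V := by
  have hA := G.isHermitian_adjMatrix ℝ
  refine hA.aeval_apply_self_eq_div_card
    (fun i => (hA.eigenvalues_eq_or_isRoot_of_charpoly_eq hchar i).imp_right (hPq _))
    (hA.card_eigenvalues_eq_one_of_charpoly_eq hchar fun h => hpos.ne' (hPq _ h)) ?_ hpos v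
  ext x y
  simp [hreg x]

theorem sum_card_common_neighbors_of_charpoly_eq {k a b e : ℕ} {r₁ r₂ r₃ : ℝ}
    (hreg : G.IsRegularOfDegree k) (hchar : (G.adjMatrix ℝ).charpoly =
      (X - C (k : ℝ)) * (X - C r₁) ^ a * (X - C r₂) ^ b * (X - C r₃) ^ e)
    (h₁ : r₁ < k) (h₂ : r₂ < k) (h₃ : r₃ < k) (v : V) :
    ∑ y ∈ G.neighborFinset v, (#(G.neighborFinset v ∩ G.neighborFinset y) : ℝ)
      - (r₁ + r₂ + r₃) * k - r₁ * r₂ * r₃ = (k - r₁) * (k - r₂) * (k - r₃) / Fintype.card V := by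
  have hchar' : (G.adjMatrix ℝ).charpoly = (X - C (k : ℝ)) *
      ((X - C r₁) ^ a * (X - C r₂) ^ b * (X - C r₃) ^ e) := by
    rw [hchar]; ring
  have h := G.aeval_adjMatrix_apply_self_of_charpoly_eq hreg hchar'
    (fun _ => isRoot_cubic_of_isRoot_pow_mul_pow_mul_pow)
    (by simpa using mul_pos (mul_pos (sub_pos.2 h₁) (sub_pos.2 h₂)) (sub_pos.2 h₃)) v
  simp only [aeval_cubic, Matrix.sub_apply, Matrix.add_apply, Matrix.smul_apply,
    Matrix.one_apply_eq, smul_eq_mul, adjMatrix_pow_three_apply_self, pow_two,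
    adjMatrix_mul_self_apply_self, hreg v, adjMatrix_apply, G.irrefl, if_false, eval_mul,
    eval_sub, eval_X, eval_C] at h
  linear_combination h

theorem sum_sq_card_common_neighbors_of_charpoly_eq {k a b e μ : ℕ} {r₁ r₂ r₃ : ℝ}
    (hreg : G.IsRegularOfDegree k) (v : V)
    (hμ : ∀ y, v ≠ y → ¬ G.Adj v y → #(G.neighborFinset v ∩ G.neighborFinset y) = μ)
    (hchar : (G.adjMatrix ℝ).charpoly =
      (X - C (k : ℝ)) * (X - C r₁) ^ a * (X - C r₂) ^ b * (X - C r₃) ^ e)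
    (h₁ : r₁ < k) (h₂ : r₂ < k) (h₃ : r₃ < k) :
    k ^ 2 + ∑ y ∈ G.neighborFinset v, (#(G.neighborFinset v ∩ G.neighborFinset y) : ℝ) ^ 2
      + (Fintype.card V - k - 1) * μ ^ 2
      - (r₁ + r₂ + r₃) * ∑ y ∈ G.neighborFinset v, (#(G.neighborFinset v ∩ G.neighborFinset y) : ℝ)
      + (r₁ * r₂ + r₁ * r₃ + r₂ * r₃) * k
      = k * ((k - r₁) * (k - r₂) * (k - r₃) / Fintype.card V) := by
  have hchar' : (G.adjMatrix ℝ).charpoly = (X - C (k : ℝ)) *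
      ((X - C r₁) ^ a * (X - C r₂) ^ b * (X - C r₃) ^ e) := by
    rw [hchar]; ring
  have hPq : ∀ x, ((X - C r₁) ^ a * (X - C r₂) ^ b * (X - C r₃) ^ e).IsRoot x →
      ((X - C r₁) * (X - C r₂) * (X - C r₃)).IsRoot x :=
    fun _ => isRoot_cubic_of_isRoot_pow_mul_pow_mul_pow
  have h := congrFun (congrFun (G.adjMatrix_mul_aeval_of_charpoly_eq hchar' hPq) v) v
  have hexp : G.adjMatrix ℝ * aeval (G.adjMatrix ℝ) ((X - C r₁) * (X - C r₂) * (X - C r₃)) =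
      G.adjMatrix ℝ ^ 4 - (r₁ + r₂ + r₃) • G.adjMatrix ℝ ^ 3
        + (r₁ * r₂ + r₁ * r₃ + r₂ * r₃) • G.adjMatrix ℝ ^ 2 - (r₁ * r₂ * r₃) • G.adjMatrix ℝ := by
    rw [aeval_cubic]
    simp only [mul_sub, mul_add, mul_smul_comm, mul_one, ← pow_succ', ← sq]
  rw [Matrix.smul_apply, G.aeval_adjMatrix_apply_self_of_charpoly_eq hreg hchar' hPq
    (by simpa using mul_pos (mul_pos (sub_pos.2 h₁) (sub_pos.2 h₂)) (sub_pos.2 h₃)) v,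
    hexp] at h
  simp only [Matrix.sub_apply, Matrix.add_apply, Matrix.smul_apply, smul_eq_mul,
    adjMatrix_pow_four_apply_self, adjMatrix_pow_three_apply_self, pow_two (G.adjMatrix ℝ),
    adjMatrix_mul_self_apply_self, hreg v, adjMatrix_apply, G.irrefl, if_false, eval_mul,
    eval_sub, eval_X, eval_C] at h
  have hsplit := congrArg (Nat.cast : ℕ → ℝ) (G.sum_sq_card_common_neighbors v hμ)
  push_cast [hreg v, Nat.cast_sub (hreg v ▸ G.degree_lt_card_verts v)] at hsplit
  linear_combination h - hsplit

end SimpleGraph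

theorem Finset.sum_sub_sq {ι R : Type*} [CommRing R] (t : Finset ι) (f : ι → R) (a : R) :
    ∑ i ∈ t, (f i - a) ^ 2 = ∑ i ∈ t, f i ^ 2 - 2 * a * ∑ i ∈ t, f i + #t * a ^ 2 := by
  simp only [sub_sq, sum_add_distrib, sum_sub_distrib, ← sum_mul, ← mul_sum, sum_const,
    nsmul_eq_mul]
  ring

/-- The multiplicities in the spectrum of the `s`-clique extension of `T(n)` add up to its
`s · n(n-1)/2` vertices. -/
theorem cast_sum_multiplicities_eq (s n : ℕ) (hs : 1 ≤ s) (hn : 3 ≤ n) :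
    ((1 + (n - 1) + (n ^ 2 - 3 * n) / 2 + (s - 1) * n * (n - 1) / 2 : ℕ) : ℝ) =
      s * n * (n - 1) / 2 := by
  have h3n : 3 * n ≤ n ^ 2 := by nlinarith
  have hd₁ : 2 ∣ n ^ 2 - 3 * n := by
    rw [← even_iff_two_dvd, Nat.even_sub h3n]
    simp [parity_simps]
  have hd₂ : 2 ∣ (s - 1) * n * (n - 1) := by
    rw [mul_assoc]
    exact (Nat.even_mul_pred_self n).two_dvd.mul_left _
  push_cast [Nat.cast_div hd₁ (by norm_num : ((2 : ℕ) : ℝ) ≠ 0),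
    Nat.cast_div hd₂ (by norm_num : ((2 : ℕ) : ℝ) ≠ 0), h3n, hs, (by omega : 1 ≤ n)]
  ring

/-- For a co-edge-regular graph (`μ = 4s`) cospectral with the `s`-clique extension of
`T(n)`, the sum of the squared valencies inside the local graph of any vertex equals
`2sn(s²n² − 6sn − 6s² + 10s + 8) + 9s³ + 3s² − 24s − 4`, and consequently
`Σ (d_i − (sn−2))² = (s−1)s²(n−3)²`. -/
theorem local_degree_square_sum {V : Type*} [Fintype V] [DecidableEq V]
    (G : SimpleGraph V) [DecidableRel G.Adj]
    (s n : ℕ) (hs : 2 ≤ s) (hn : 4 ≤ n)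
    (hreg : G.IsRegularOfDegree (s * (2 * n - 3) - 1))
    (hcoedge : ∀ x y : V, x ≠ y → ¬ G.Adj x y →
      (G.neighborFinset x ∩ G.neighborFinset y).card = 4 * s)
    (hspec : (G.adjMatrix ℝ).charpoly =
      (X - C ((s : ℝ) * (2 * n - 3) - 1)) *
        (X - C ((s : ℝ) * ((n : ℝ) - 3) - 1)) ^ (n - 1) *
        (X - C (-(s : ℝ) - 1)) ^ ((n ^ 2 - 3 * n) / 2) *
        (X - C (-1)) ^ ((s - 1) * n * (n - 1) / 2))
    (v : V) :
    (∑ y ∈ G.neighborFinset v, ((G.neighborFinset v ∩ G.neighborFinset y).card : ℤ) ^ 2) =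
      2 * (s : ℤ) * n * ((s : ℤ) ^ 2 * n ^ 2 - 6 * s * n - 6 * s ^ 2 + 10 * s + 8)
        + 9 * s ^ 3 + 3 * s ^ 2 - 24 * s - 4 ∧
    (∑ y ∈ G.neighborFinset v,
        (((G.neighborFinset v ∩ G.neighborFinset y).card : ℤ) - ((s : ℤ) * n - 2)) ^ 2) =
      ((s : ℤ) - 1) * s ^ 2 * ((n : ℤ) - 3) ^ 2 := by
  have hs' : (2 : ℝ) ≤ s := by exact_mod_cast hs
  have hn' : (4 : ℝ) ≤ n := by exact_mod_cast hn
  have hK : ((s * (2 * n - 3) - 1 : ℕ) : ℝ) = s * (2 * n - 3) - 1 := by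
    push_cast [Nat.mul_pos (by omega : 0 < s) (by omega : 0 < 2 * n - 3),
      (by omega : 3 ≤ 2 * n)]
    ring
  generalize s * (2 * n - 3) - 1 = k at hreg hK
  rw [← hK] at hspec
  have hN : (Fintype.card V : ℝ) = s * n * (n - 1) / 2 := by
    rw [Matrix.card_eq_of_charpoly_eq hspec, cast_sum_multiplicities_eq s n
      (by omega) (by omega)]
  have h₁ : (s : ℝ) * (n - 3) - 1 < k := by rw [hK]; nlinarith
  have h₂ : -(s : ℝ) - 1 < k := by rw [hK]; nlinarith
  have h₃ : (-1 : ℝ) < k := by rw [hK]; nlinarith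
  have hdiag : ((k : ℝ) - (s * (n - 3) - 1)) * (k - (-s - 1)) * (k - -1) / Fintype.card V =
      4 * s ^ 2 * (2 * n - 3) := by
    rw [hK, hN]
    field_simp [show (n : ℝ) - 1 ≠ 0 by linarith]
    ring
  have E1 := G.sum_card_common_neighbors_of_charpoly_eq hreg hspec h₁ h₂ h₃ v
  have E2 := G.sum_sq_card_common_neighbors_of_charpoly_eq hreg v (hcoedge v) hspec h₁ h₂ h₃
  rw [hdiag, hK] at E1 E2
  rw [hN] at E2
  push_cast at E2
  refine ⟨Int.cast_injective (α := ℝ) ?_, Int.cast_injective (α := ℝ) ?_⟩ <;> push_cast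
  · linear_combination E2 + ((s : ℝ) * (n - 3) - 1 + (-s - 1) + -1) * E1
  · rw [sum_sub_sq, G.card_neighborFinset_eq_degree, hreg v, hK]
    linear_combination E2 + ((s : ℝ) * (n - 3) - 1 + (-s - 1) + -1 - 2 * (s * n - 2)) * E1
end
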